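/- arXiv:2508.15538 — 2 statements merged into one kernel-verified Lean document; each statement's English description precedes it below -/
import Mathlib

section
/- Let h be a palindromic real-rooted polynomial of degree d with nonnegative real coefficients. Then every root of h is negative; the roots of its γ-polynomial γ(h) are exactly the numbers ρ/(1+ρ)² for the roots ρ of h with −1 < ρ < 0 (with matching multiplicities); and the multiplicity of −1 as a root of h equals d − 2·deg γ(h). -/
open Polynomial

noncomputable section

/-- A real polynomial is *real-rooted* if all of its complex roots are real.
(The zero polynomial is real-rooted by convention.) -/
def RealRooted (f : Polynomial ℝ) : Prop :=
  ∀ z ∈ (f.map (algebraMap ℝ ℂ)).roots, z.im = 0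

/-- All coefficients of the polynomial are nonnegative. -/
def NonnegCoeffs (f : Polynomial ℝ) : Prop := ∀ i, 0 ≤ f.coeff i

/-- The list of real roots of `f`, with multiplicity, in weakly decreasing order. -/
def descRoots (f : Polynomial ℝ) : List ℝ := (f.roots.sort (· ≤ ·)).reverse

/-- The interlacing condition on the weakly decreasing root sequences
`α` of `f` and `β` of `g` : `β₁ ≥ α₁ ≥ β₂ ≥ α₂ ≥ …`, together with the
degree condition `deg g ∈ {deg f, deg f + 1}`. -/
def InterlacesAux (f g : Polynomial ℝ) : Prop :=
  (g.natDegree = f.natDegree ∨ g.natDegree = f.natDegree + 1) ∧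
  (∀ (i : ℕ) (hf : i < (descRoots f).length) (hg : i < (descRoots g).length),
      (descRoots f).get ⟨i, hf⟩ ≤ (descRoots g).get ⟨i, hg⟩) ∧
  (∀ (i : ℕ) (hf : i < (descRoots f).length) (hg : i + 1 < (descRoots g).length),
      (descRoots g).get ⟨i + 1, hg⟩ ≤ (descRoots f).get ⟨i, hf⟩)

/-- `f ⪯ g` : `f` interlaces `g`.  Both polynomials are required to be real-rooted;
by convention `0 ⪯ 0`, `0 ⪯ f`, `f ⪯ 0`, and any two polynomials of degree at most 1
interlace. -/
def Interlaces (f g : Polynomial ℝ) : Prop :=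
  RealRooted f ∧ RealRooted g ∧
  (f = 0 ∨ g = 0 ∨ (f.natDegree ≤ 1 ∧ g.natDegree ≤ 1) ∨ InterlacesAux f g)

/-- A finite family of real-rooted polynomials is an interlacing sequence if
`F i ⪯ F j` for all `i < j`. -/
def InterlacingSeq {n : ℕ} (F : Fin n → Polynomial ℝ) : Prop :=
  ∀ i j : Fin n, i < j → Interlaces (F i) (F j)

/-- A polynomial of degree `d` is palindromic if `coeff i = coeff (d - i)` for all `i ≤ d`. -/
def Palindromic (f : Polynomial ℝ) : Prop :=
  ∀ i ≤ f.natDegree, f.coeff i = f.coeff (f.natDegree - i)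

/-- A set `S ⊆ ℕ` is isolated if `i ∈ S` implies `i + 1 ∉ S`. -/
def IsolatedSet (S : Finset ℕ) : Prop := ∀ i ∈ S, i + 1 ∉ S

instance : DecidablePred IsolatedSet := fun S =>
  decidable_of_iff (∀ i ∈ S, i + 1 ∉ S) Iff.rfl

/-- The descent set of a permutation `w` of `{1, …, n+1}` (encoded as a permutation of
`Fin (n+1)`), as a subset of `{1, …, n}` : `Des(w) = {i ∈ {1,…,n} : w(i) > w(i+1)}`. -/
def desSet {n : ℕ} (w : Equiv.Perm (Fin (n + 1))) : Finset ℕ :=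
  (Finset.univ.filter (fun i : Fin n => w i.succ < w i.castSucc)).image
    (fun i => i.val + 1)

/-- The polynomial `p_{n,k}^{S ⊆ T}(x) = Σ x^{des(w)}`, the sum over all permutations `w`
of `{1, …, n+1}` with `w(1) = k + 1`, `Des(w)` isolated and `S ⊆ Des(w) ⊆ T`. -/
def pPoly (n k : ℕ) (S T : Finset ℕ) : Polynomial ℝ :=
  ∑ w ∈ Finset.univ.filter (fun w : Equiv.Perm (Fin (n + 1)) =>
      (w 0 : ℕ) = k ∧ IsolatedSet (desSet w) ∧ S ⊆ desSet w ∧ desSet w ⊆ T),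
    Polynomial.X ^ (desSet w).card

/-- The shifted set `S - 1 = {i - 1 : i ∈ S} ∩ {1, …, n-1}`. -/
def shiftDown (n : ℕ) (S : Finset ℕ) : Finset ℕ :=
  (S.image (fun i => i - 1)) ∩ Finset.Icc 1 (n - 1)

section Poset

variable (P : Type*) [Fintype P] [PartialOrder P] [OrderBot P]

/-- A finite poset `P` with a minimum is simplicial of rank `n` if for every maximal
element `m` the interval `[⊥, m]` is order-isomorphic to the boolean lattice of
subsets of an `n`-element set. -/
def SimplicialOfRank (n : ℕ) : Prop :=
  ∀ m : P, IsMax m → Nonempty ((Set.Icc (⊥ : P) m) ≃o Finset (Fin n))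

variable {P}

/-- `rk` is a rank function: `rk ⊥ = 0` and ranks increase by one along covers. -/
def IsRankFunction (rk : P → ℕ) : Prop :=
  rk ⊥ = 0 ∧ ∀ a b : P, a ⋖ b → rk b = rk a + 1

/-- `f_{i-1}` : the number of elements of `P` of rank `i`. -/
def fvec (rk : P → ℕ) (i : ℕ) : ℕ := (Finset.univ.filter (fun x => rk x = i)).card

/-- The generating polynomial `Σ_{i=0}^n h_i x^i = Σ_{i=0}^n f_{i-1} x^i (1-x)^{n-i}`
of the h-vector of `P`. -/
def hPoly (rk : P → ℕ) (n : ℕ) : Polynomial ℤ :=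
  ∑ i ∈ Finset.range (n + 1),
    Polynomial.C (fvec rk i : ℤ) * Polynomial.X ^ i * (1 - Polynomial.X) ^ (n - i)

/-- The h-vector entry `h_k` of `P`. -/
def hvec (rk : P → ℕ) (n k : ℕ) : ℤ := (hPoly rk n).coeff k

/-- The flag f-vector `α_{P̂}(T)` : the number of chains in `P̂ ∖ {0̂, 1̂} = P ∖ {⊥}`
whose set of ranks is exactly `T`. -/
def flagF (rk : P → ℕ) (T : Finset ℕ) : ℕ :=
  Nat.card {c : Finset P // IsChain (· ≤ ·) (c : Set P) ∧ (⊥ : P) ∉ c ∧ c.image rk = T}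

/-- The flag h-vector `β_{P̂}(S) = Σ_{T ⊆ S} (-1)^{|S ∖ T|} α_{P̂}(T)`. -/
def flagH (rk : P → ℕ) (S : Finset ℕ) : ℤ :=
  ∑ T ∈ S.powerset, (-1) ^ ((S \ T).card) * (flagF rk T : ℤ)

/-- The flag h-vector of the dual poset `P̂*` : `β_{P̂*}(S) = β_{P̂}({n+1-s : s ∈ S})`. -/
def flagHDual (rk : P → ℕ) (n : ℕ) (S : Finset ℕ) : ℤ :=
  flagH rk (S.image (fun s => n + 1 - s))

/-- The Chow polynomial
`H_{P̂}(x) = Σ_{S ⊆ {2,…,n} isolated} β_{P̂}(S) x^{|S|} (1+x)^{n-2|S|}`. -/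
def chowPoly (rk : P → ℕ) (n : ℕ) : Polynomial ℝ :=
  ∑ S ∈ (Finset.Icc 2 n).powerset.filter IsolatedSet,
    (flagH rk S : ℝ) • (Polynomial.X ^ S.card * (1 + Polynomial.X) ^ (n - 2 * S.card))

/-- The augmented Chow polynomial
`H^aug_{P̂}(x) = Σ_{S ⊆ {1,…,n} isolated} β_{P̂}(S) x^{|S|} (1+x)^{n+1-2|S|}`. -/
def chowAugPoly (rk : P → ℕ) (n : ℕ) : Polynomial ℝ :=
  ∑ S ∈ (Finset.Icc 1 n).powerset.filter IsolatedSet,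
    (flagH rk S : ℝ) • (Polynomial.X ^ S.card * (1 + Polynomial.X) ^ (n + 1 - 2 * S.card))

/-- The Chow polynomial of the dual poset `P̂*`. -/
def chowDualPoly (rk : P → ℕ) (n : ℕ) : Polynomial ℝ :=
  ∑ S ∈ (Finset.Icc 2 n).powerset.filter IsolatedSet,
    (flagHDual rk n S : ℝ) • (Polynomial.X ^ S.card * (1 + Polynomial.X) ^ (n - 2 * S.card))

/-- The augmented Chow polynomial of the dual poset `P̂*`. -/
def chowAugDualPoly (rk : P → ℕ) (n : ℕ) : Polynomial ℝ :=
  ∑ S ∈ (Finset.Icc 1 n).powerset.filter IsolatedSet,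
    (flagHDual rk n S : ℝ) • (Polynomial.X ^ S.card * (1 + Polynomial.X) ^ (n + 1 - 2 * S.card))

end Poset

end



noncomputable section Statement15Aux

lemma realRooted_card {p : Polynomial ℝ} (hp : p ≠ 0)
    (hrr : ∀ z ∈ (p.map (algebraMap ℝ ℂ)).roots, z.im = 0) :
    p.roots.card = p.natDegree := by
  classical
  have hinj : Function.Injective (algebraMap ℝ ℂ) := (algebraMap ℝ ℂ).injective
  have hcard : ((p.map (algebraMap ℝ ℂ)).roots).card = p.natDegree := by
    have := (splits_iff_card_roots (f := p.map (algebraMap ℝ ℂ))).mp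
      (IsAlgClosed.splits _)
    rwa [natDegree_map] at this
  have key : (p.map (algebraMap ℝ ℂ)).roots.map Complex.re = p.roots := by
    refine Multiset.ext.mpr fun y => ?_
    rw [Multiset.count_map, count_roots]
    have h1 : Multiset.filter (fun z => y = Complex.re z) (p.map (algebraMap ℝ ℂ)).roots
        = Multiset.filter (fun z => (y : ℂ) = z) (p.map (algebraMap ℝ ℂ)).roots := by
      refine Multiset.filter_congr fun z hz => ?_
      have hz0 := hrr z hz
      constructor
      · intro hre
        exact (Complex.ext (by simp [← hre]) (by simp [hz0])).symm
      · intro hzy; rw [← hzy]; simp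
    have h2 : Multiset.card (Multiset.filter (fun z => (y:ℂ) = z) (p.map (algebraMap ℝ ℂ)).roots)
        = Multiset.count ((y:ℂ)) (p.map (algebraMap ℝ ℂ)).roots := by
      rw [Multiset.count, Multiset.countP_eq_card_filter]
    have h3 : rootMultiplicity ((y:ℂ)) (p.map (algebraMap ℝ ℂ)) = rootMultiplicity y p := by
      have := eq_rootMultiplicity_map (p := p) hinj y
      simpa using this.symm
    rw [h1, h2, count_roots, h3]
  calc p.roots.card = ((p.map (algebraMap ℝ ℂ)).roots.map Complex.re).card := by rw [key]
    _ = _ := by rw [Multiset.card_map, hcard]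


def T (n : ℕ) (p : Polynomial ℝ) : Polynomial ℝ :=
  ∑ i ∈ Finset.range (n + 1), Polynomial.C (p.coeff i) * Polynomial.X ^ i *
    (1 + Polynomial.X) ^ (2 * (n - i))

abbrev ι : Polynomial ℝ →+* RatFunc ℝ := algebraMap (Polynomial ℝ) (RatFunc ℝ)

lemma one_add_t_ne : (1 + ι X) ≠ 0 := by
  have h1 : (1 : RatFunc ℝ) + ι X = ι (1 + X) := by simp
  rw [h1]
  apply RatFunc.algebraMap_ne_zero
  intro h0
  have := congrArg (fun q => Polynomial.coeff q 0) h0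
  simp at this

lemma upow (i : ℕ) : (ι X / (1 + ι X) ^ 2) ^ i * (1 + ι X) ^ (2 * i) = ι X ^ i := by
  rw [div_pow, ← pow_mul, mul_comm (2:ℕ) i, div_mul_cancel₀ _ (pow_ne_zero _ one_add_t_ne)]

lemma Tspec {n : ℕ} {p : Polynomial ℝ} (hpn : p.natDegree ≤ n) :
    ι (T n p) = (1 + ι X) ^ (2 * n) * Polynomial.aeval (ι X / (1 + ι X) ^ 2) p := by
  rw [Polynomial.aeval_eq_sum_range' (Nat.lt_succ_of_le hpn)]
  rw [T, map_sum, Finset.mul_sum]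
  refine Finset.sum_congr rfl fun i hi => ?_
  have hin : i ≤ n := Nat.lt_succ_iff.mp (Finset.mem_range.mp hi)
  rw [map_mul, map_mul, map_pow, map_pow]
  have hC : ι (Polynomial.C (p.coeff i)) = algebraMap ℝ (RatFunc ℝ) (p.coeff i) := by
    simp [ι, IsScalarTower.algebraMap_apply ℝ (Polynomial ℝ) (RatFunc ℝ)]
  rw [hC, map_add, map_one, Algebra.smul_def]
  set A := algebraMap ℝ (RatFunc ℝ) (p.coeff i)
  calc A * ι X ^ i * (1 + ι X)^(2*(n-i))
      = (1 + ι X)^(2*(n-i)) * (A * (ι X)^i) := by ring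
    _ = (1 + ι X)^(2*(n-i)) * (A * ((ι X/(1 + ι X)^2)^i * (1 + ι X)^(2*i))) := by rw [upow i]
    _ = ((1 + ι X)^(2*(n-i)) * (1 + ι X)^(2*i)) * (A * (ι X/(1 + ι X)^2)^i) := by ring
    _ = (1 + ι X)^(2*n) * (A * (ι X/(1 + ι X)^2)^i) := by
        rw [← pow_add]; congr 2; omega

lemma Tmul {m n : ℕ} {p q : Polynomial ℝ} (hp : p.natDegree ≤ m) (hq : q.natDegree ≤ n) :
    T (m + n) (p * q) = T m p * T n q := by
  apply IsFractionRing.injective (Polynomial ℝ) (RatFunc ℝ)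
  have hpq : (p * q).natDegree ≤ m + n := natDegree_mul_le.trans (add_le_add hp hq)
  rw [map_mul, Tspec hp, Tspec hq, Tspec hpq, map_mul]
  rw [Nat.mul_add, pow_add]
  ring

lemma Tconst (p : Polynomial ℝ) : T 0 p = Polynomial.C (p.coeff 0) := by
  simp [T]

lemma Tlin (y : ℝ) : T 1 (X - C y) = X - C y * (1 + X) ^ 2 := by
  have h0 : (X - C y).coeff 0 = -y := by simp
  have h1 : (X - C y).coeff 1 = 1 := by simp
  simp only [T, Finset.sum_range_succ, Finset.sum_range_zero, h0, h1]
  simp [map_neg]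
  ring

lemma Tprod (s : Multiset ℝ) :
    T (Multiset.card s) ((s.map fun y => X - C y).prod)
      = (s.map fun y => X - C y * (1 + X) ^ 2).prod := by
  induction s using Multiset.induction with
  | empty => simpa using Tconst 1
  | cons a s ih =>
      rw [Multiset.card_cons, Multiset.map_cons, Multiset.map_cons, Multiset.prod_cons,
        Multiset.prod_cons, add_comm (Multiset.card s) 1]
      rw [Tmul (by simpa using natDegree_X_sub_C_le a)
        (by rw [natDegree_multiset_prod_X_sub_C_eq_card])]
      rw [Tlin, ih]

lemma term_natDeg (a : ℝ) (i k : ℕ) :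
    (Polynomial.C a * Polynomial.X ^ i * (1 + Polynomial.X) ^ k).natDegree ≤ i + k := by
  refine natDegree_mul_le.trans (add_le_add (natDegree_mul_le.trans ?_) ?_)
  · simp [natDegree_C]
  · refine (natDegree_pow_le).trans ?_
    have : (1 + X : Polynomial ℝ).natDegree ≤ 1 := by
      rw [add_comm]; exact (natDegree_X_add_C 1).le
    calc k * (1 + X : Polynomial ℝ).natDegree ≤ k * 1 := Nat.mul_le_mul_left k this
      _ = k := Nat.mul_one k

lemma TnatDegree_le (r : ℕ) (q : Polynomial ℝ) : (T r q).natDegree ≤ 2 * r := by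
  refine natDegree_sum_le_of_forall_le _ _ fun i hi => ?_
  have hir : i ≤ r := Nat.lt_succ_iff.mp (Finset.mem_range.mp hi)
  exact (term_natDeg _ _ _).trans (by omega)

lemma Tcoeff_top (r : ℕ) (q : Polynomial ℝ) : (T r q).coeff (2 * r) = q.coeff 0 := by
  rw [T, finset_sum_coeff]
  rw [Finset.sum_eq_single 0]
  · simp only [pow_zero, mul_one, Nat.sub_zero]
    rw [coeff_C_mul, add_comm, coeff_X_add_one_pow, Nat.choose_self]
    simp
  · intro i hi hi0
    have hir : i ≤ r := Nat.lt_succ_iff.mp (Finset.mem_range.mp hi)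
    apply coeff_eq_zero_of_natDegree_lt
    calc (Polynomial.C (q.coeff i) * X ^ i * (1 + X) ^ (2 * (r - i))).natDegree
        ≤ i + 2 * (r - i) := term_natDeg _ _ _
      _ < 2 * r := by omega
  · intro hn; simp at hn

lemma Teval_neg_one {r : ℕ} {q : Polynomial ℝ} :
    (T r q).eval (-1) = q.coeff r * (-1) ^ r := by
  rw [T, eval_finset_sum]
  rw [Finset.sum_eq_single r]
  · simp
  · intro i hi hir
    have : i < r := lt_of_le_of_ne (Nat.lt_succ_iff.mp (Finset.mem_range.mp hi)) hir
    simp only [eval_mul, eval_pow, eval_add, eval_one, eval_X, eval_C]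
    have : (1 + (-1:ℝ)) ^ (2 * (r - i)) = 0 := by
      rw [show (1:ℝ) + (-1) = 0 by ring, zero_pow (by omega)]
    rw [this, mul_zero]
  · intro hn; simp at hn

lemma Teval {r : ℕ} {q : Polynomial ℝ} (hq : q.natDegree ≤ r) {x : ℝ} (hx : 1 + x ≠ 0) :
    (T r q).eval x = (1 + x) ^ (2 * r) * q.eval (x / (1 + x) ^ 2) := by
  have hev : q.eval (x / (1 + x)^2) = Polynomial.aeval (x / (1+x)^2) q := by simp
  rw [hev, Polynomial.aeval_eq_sum_range' (Nat.lt_succ_of_le hq)]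
  rw [T, eval_finset_sum, Finset.mul_sum]
  refine Finset.sum_congr rfl fun i hi => ?_
  have hin : i ≤ r := Nat.lt_succ_iff.mp (Finset.mem_range.mp hi)
  simp only [eval_mul, eval_pow, eval_add, eval_one, eval_X, eval_C, smul_eq_mul]
  have hu : (x / (1 + x)^2)^i * (1 + x)^(2*i) = x^i := by
    rw [div_pow, ← pow_mul, mul_comm (2:ℕ) i, div_mul_cancel₀ _ (pow_ne_zero _ hx)]
  calc q.coeff i * x ^ i * (1 + x)^(2*(r-i))
      = (1 + x)^(2*(r-i)) * (q.coeff i * x^i) := by ring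
    _ = (1 + x)^(2*(r-i)) * (q.coeff i * ((x/(1+x)^2)^i * (1+x)^(2*i))) := by rw [hu]
    _ = ((1 + x)^(2*(r-i)) * (1+x)^(2*i)) * (q.coeff i * (x/(1+x)^2)^i) := by ring
    _ = (1 + x)^(2*r) * (q.coeff i * (x/(1+x)^2)^i) := by rw [← pow_add]; congr 2; omega

lemma roots_card_of_dvd {p h : Polynomial ℝ} (hh : h ≠ 0) (hdvd : p ∣ h) (hp : p ≠ 0)
    (hrr : ∀ z ∈ (h.map (algebraMap ℝ ℂ)).roots, z.im = 0) :
    p.roots.card = p.natDegree := by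
  have hinj : Function.Injective (algebraMap ℝ ℂ) := (algebraMap ℝ ℂ).injective
  have hmapne : h.map (algebraMap ℝ ℂ) ≠ 0 := (Polynomial.map_ne_zero_iff hinj).mpr hh
  refine realRooted_card hp fun z hz => hrr z ?_
  exact Multiset.mem_of_le
    (roots.le_of_dvd hmapne (Polynomial.map_dvd _ hdvd)) hz

lemma bind_filter_map (s : Multiset ℝ) (F : ℝ → Multiset ℝ) (P : ℝ → Prop) [DecidablePred P]
    (φ : ℝ → ℝ) (hF : ∀ y ∈ s, ((F y).filter P).map φ = {y}) :
    (((s.bind F).filter P).map φ) = s := by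
  induction s using Multiset.induction with
  | empty => simp
  | cons a s ih =>
      rw [Multiset.cons_bind, Multiset.filter_add, Multiset.map_add,
        hF a (Multiset.mem_cons_self a s),
        ih (fun y hy => hF y (Multiset.mem_cons_of_mem hy))]
      rw [Multiset.singleton_add]

theorem statement15' (h : Polynomial ℝ) (hne : h ≠ 0)
    (hnn : ∀ i, 0 ≤ h.coeff i)
    (hpal : ∀ i ≤ h.natDegree, h.coeff i = h.coeff (h.natDegree - i))
    (hrr : ∀ z ∈ (h.map (algebraMap ℝ ℂ)).roots, z.im = 0)
    (γ : ℕ → ℝ)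
    (hexp : h = ∑ i ∈ Finset.range (h.natDegree / 2 + 1),
        Polynomial.C (γ i) * Polynomial.X ^ i * (1 + Polynomial.X) ^ (h.natDegree - 2 * i)) :
    (∀ ρ ∈ h.roots, ρ < 0) ∧
    ((∑ i ∈ Finset.range (h.natDegree / 2 + 1), Polynomial.C (γ i) * Polynomial.X ^ i).roots
        = (h.roots.filter (fun ρ => -1 < ρ ∧ ρ < 0)).map (fun ρ => ρ / (1 + ρ) ^ 2)) ∧
    h.roots.count (-1)
        = h.natDegree
            - 2 * (∑ i ∈ Finset.range (h.natDegree / 2 + 1),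
                Polynomial.C (γ i) * Polynomial.X ^ i).natDegree := by
  classical
  set d := h.natDegree with hd
  set g : Polynomial ℝ := ∑ i ∈ Finset.range (d / 2 + 1), Polynomial.C (γ i) * Polynomial.X ^ i
    with hgdef
  set e := g.natDegree with he
  -- leading coefficient positive
  have hlcne : h.coeff d ≠ 0 := leadingCoeff_ne_zero.mpr hne
  have hlc : 0 < h.coeff d := lt_of_le_of_ne (hnn d) (Ne.symm hlcne)
  have hc0 : 0 < h.coeff 0 := by
    have := hpal 0 (Nat.zero_le _); rw [Nat.sub_zero] at this; rw [this]; exact hlc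
  -- Part 1
  have part1 : ∀ ρ ∈ h.roots, ρ < 0 := by
    intro ρ hρ
    have hev : h.eval ρ = 0 := (mem_roots hne).mp hρ
    by_contra hρ0
    push_neg at hρ0
    have : 0 < h.eval ρ := by
      rw [Polynomial.eval_eq_sum_range]
      refine Finset.sum_pos' (fun i _ => mul_nonneg (hnn i) (pow_nonneg hρ0 i)) ?_
      exact ⟨0, Finset.mem_range.mpr (Nat.succ_pos _), by simpa using hc0⟩
    linarith
  -- coefficients of g
  have hgcoeff : ∀ i ≤ d / 2, g.coeff i = γ i := by
    intro i hi
    rw [hgdef, finset_sum_coeff]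
    rw [Finset.sum_eq_single i]
    · simp
    · intro j _ hj; simp [coeff_X_pow, Ne.symm hj]
    · intro hmem; exact absurd (Finset.mem_range.mpr (by omega)) hmem
  have he2 : e ≤ d / 2 := by
    rw [he, hgdef]
    refine natDegree_sum_le_of_forall_le _ _ fun i hi => ?_
    exact (natDegree_C_mul_le _ _).trans (by
      simpa using Nat.lt_succ_iff.mp (Finset.mem_range.mp hi))
  have h2e : 2 * e ≤ d := by omega
  -- γ 0 ≠ 0
  have hγ0 : γ 0 = h.coeff 0 := by
    rw [coeff_zero_eq_eval_zero, hexp, eval_finset_sum]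
    rw [Finset.sum_eq_single 0]
    · simp
    · intro i _ hi; simp [zero_pow hi]
    · intro hmem; exact absurd (Finset.mem_range.mpr (by omega)) hmem
  have hgne : g ≠ 0 := by
    intro h0
    have := hgcoeff 0 (Nat.zero_le _)
    rw [h0] at this
    simp only [coeff_zero] at this
    rw [hγ0] at this; exact absurd this.symm (ne_of_gt hc0)
  have hγe : g.coeff e ≠ 0 := by
    rw [he]; exact leadingCoeff_ne_zero.mpr hgne
  have hγi0 : ∀ i, e < i → i ≤ d / 2 → γ i = 0 := fun i hei hid => by
    rw [← hgcoeff i hid]; exact coeff_eq_zero_of_natDegree_lt hei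
  -- the factorization h = (1+X)^(d-2e) * T e g
  have claim1 : h = (1 + Polynomial.X) ^ (d - 2 * e) * T e g := by
    conv_lhs => rw [hexp]
    have hsub : Finset.range (e + 1) ⊆ Finset.range (d / 2 + 1) :=
      Finset.range_subset_range.mpr (by omega)
    rw [← Finset.sum_subset hsub (fun i hi hni => by
      have hie : e < i := by
        simp only [Finset.mem_range] at hi hni; omega
      have hid : i ≤ d / 2 := by
        simp only [Finset.mem_range] at hi; omega
      rw [hγi0 i hie hid]; simp)]
    rw [T, Finset.mul_sum]
    refine Finset.sum_congr rfl fun i hi => ?_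
    have hie : i ≤ e := Nat.lt_succ_iff.mp (Finset.mem_range.mp hi)
    rw [hgcoeff i (by omega)]
    rw [show d - 2 * i = (d - 2 * e) + 2 * (e - i) by omega, pow_add]
    ring
  set G := T e g with hG
  have hGm1 : G.eval (-1) ≠ 0 := by
    rw [hG, Teval_neg_one]
    exact mul_ne_zero hγe (pow_ne_zero _ (by norm_num))
  have hGne : G ≠ 0 := fun h0 => hGm1 (by rw [h0]; simp)
  -- factor g into linear factors
  obtain ⟨q, hq⟩ := prod_multiset_X_sub_C_dvd g
  have hprodne : ((g.roots.map fun y => X - C y).prod) ≠ 0 :=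
    Monic.ne_zero (monic_multiset_prod_of_monic _ _ fun y _ => monic_X_sub_C y)
  have hq0 : q ≠ 0 := fun h0 => hgne (by rw [hq, h0, mul_zero])
  have hrootsq : q.roots = 0 := by
    have h1 : g.roots = g.roots + q.roots := by
      conv_lhs => rw [hq]
      rw [roots_mul (by rw [← hq]; exact hgne), roots_multiset_prod_X_sub_C]
    exact (left_eq_add.mp h1)
  have hdeg : e = Multiset.card g.roots + q.natDegree := by
    rw [he]
    conv_lhs => rw [hq]
    rw [natDegree_mul hprodne hq0, natDegree_multiset_prod_X_sub_C_eq_card]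
  have hq00 : q.coeff 0 ≠ 0 := by
    rw [coeff_zero_eq_eval_zero]
    intro h0
    have : (0:ℝ) ∈ q.roots := (mem_roots hq0).mpr h0
    rw [hrootsq] at this; simp at this
  have hr0 : q.natDegree = 0 := by
    by_contra hr
    set r := q.natDegree with hrdef
    have hTeg : G = T (Multiset.card g.roots) ((g.roots.map fun y => X - C y).prod)
        * T r q := by
      rw [hG]
      conv_lhs => rw [hq, show e = Multiset.card g.roots + r from hdeg]
      exact Tmul (by rw [natDegree_multiset_prod_X_sub_C_eq_card]) le_rfl
    have hTrq_dvd : T r q ∣ h :=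
      ⟨(1 + Polynomial.X) ^ (d - 2 * e)
        * T (Multiset.card g.roots) ((g.roots.map fun y => X - C y).prod),
        by rw [claim1, hTeg]; ring⟩
    have hTrqne : T r q ≠ 0 := fun h0 => hq00 (by rw [← Tcoeff_top r q, h0, coeff_zero])
    have hcard : (T r q).roots.card = (T r q).natDegree :=
      roots_card_of_dvd hne hTrq_dvd hTrqne hrr
    have hTdeg : (T r q).natDegree = 2 * r :=
      le_antisymm (TnatDegree_le r q)
        (le_natDegree_of_ne_zero (by rw [Tcoeff_top]; exact hq00))
    have hpos : 0 < (T r q).roots.card := by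
      rw [hcard, hTdeg]; omega
    obtain ⟨x, hx⟩ := Multiset.card_pos_iff_exists_mem.mp hpos
    have hxev : (T r q).eval x = 0 := (mem_roots hTrqne).mp hx
    by_cases hx1 : 1 + x = 0
    · have hxm1 : x = -1 := by linarith
      rw [hxm1, Teval_neg_one] at hxev
      rcases mul_eq_zero.mp hxev with h1 | h2
      · exact (leadingCoeff_ne_zero.mpr hq0) h1
      · exact pow_ne_zero _ (by norm_num : (-1:ℝ) ≠ 0) h2
    · rw [Teval le_rfl hx1] at hxev
      rcases mul_eq_zero.mp hxev with h1 | h2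
      · exact pow_ne_zero _ hx1 h1
      · have : (x / (1+x)^2) ∈ q.roots := (mem_roots hq0).mpr h2
        rw [hrootsq] at this; simp at this
  have hcard_g : Multiset.card g.roots = e := by omega
  have hGfact : G = (g.roots.map fun y => X - C y * (1 + X)^2).prod * C (q.coeff 0) := by
    rw [hG]
    conv_lhs => rw [hq, show e = Multiset.card g.roots + 0 by omega]
    rw [Tmul (by rw [natDegree_multiset_prod_X_sub_C_eq_card]) (by omega), Tprod, Tconst]
  set Qp : ℝ → Polynomial ℝ := fun y => X - C y * (1 + X)^2 with hQp
  have hGdvdh : G ∣ h := ⟨(1 + Polynomial.X) ^ (d - 2 * e), by rw [claim1]; ring⟩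
  have hQdvd : ∀ y ∈ g.roots, Qp y ∣ h := by
    intro y hy
    have h1 : Qp y ∣ (g.roots.map Qp).prod := Multiset.dvd_prod (Multiset.mem_map_of_mem _ hy)
    have h2 : (g.roots.map Qp).prod ∣ G := ⟨C (q.coeff 0), hGfact⟩
    exact (h1.trans h2).trans hGdvdh
  have hyne : ∀ y ∈ g.roots, y ≠ 0 := by
    intro y hy h0
    have hev : g.eval y = 0 := (mem_roots hgne).mp hy
    rw [h0, ← coeff_zero_eq_eval_zero, hgcoeff 0 (Nat.zero_le _), hγ0] at hev
    exact (ne_of_gt hc0) hev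
  have key : ∀ y ∈ g.roots,
      (((Qp y).roots.filter (fun ρ => -1 < ρ ∧ ρ < 0)).map (fun ρ => ρ / (1 + ρ)^2))
        = ({y} : Multiset ℝ) := by
    intro y hy
    have hy0 : y ≠ 0 := hyne y hy
    have hquad : Qp y = C (-y) * X^2 + C (1 - 2*y) * X + C (-y) := by
      simp only [hQp, map_neg, map_sub, map_one, map_mul, map_ofNat]
      ring
    have hdeg2 : (Qp y).natDegree = 2 := by
      rw [hquad]; exact natDegree_quadratic (neg_ne_zero.mpr hy0)
    have hQne : Qp y ≠ 0 := fun h0 => by rw [h0] at hdeg2; simp at hdeg2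
    have hcard2 : (Qp y).roots.card = 2 := by
      rw [roots_card_of_dvd hne (hQdvd y hy) hQne hrr, hdeg2]
    obtain ⟨ρ₁, ρ₂, his⟩ := Multiset.card_eq_two.mp hcard2
    have hfacts : ∀ ρ ∈ (Qp y).roots, ρ < 0 ∧ 1 + ρ ≠ 0 ∧ ρ / (1+ρ)^2 = y := by
      intro ρ hρ
      have hneg : ρ < 0 := part1 ρ
        (Multiset.mem_of_le (roots.le_of_dvd hne (hQdvd y hy)) hρ)
      have hev : ρ - y*(1+ρ)^2 = 0 := by
        have hev0 := (mem_roots hQne).mp hρ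
        rw [hQp] at hev0
        simpa using hev0
      have hne1 : 1 + ρ ≠ 0 := by
        intro h1
        rw [h1] at hev
        have : ρ = 0 := by simpa using hev
        rw [this] at h1; norm_num at h1
      refine ⟨hneg, hne1, ?_⟩
      field_simp
      linarith [hev]
    have h1f := hfacts ρ₁ (by rw [his]; exact Multiset.mem_cons_self _ _)
    have h2f := hfacts ρ₂ (by rw [his]; simp)
    obtain ⟨hρ1neg, hρ1ne, hρ1y⟩ := h1f
    obtain ⟨hρ2neg, hρ2ne, hρ2y⟩ := h2f
    have hprod12 : ρ₁ * ρ₂ = 1 := by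
      have hsplit : Splits (Qp y) :=
        splits_iff_card_roots.mpr (by rw [hcard2, hdeg2])
      have hlead : (Qp y).leadingCoeff = -y := by
        rw [leadingCoeff, hdeg2, hquad]
        simp [coeff_X, coeff_C, coeff_X_pow, coeff_C_mul, coeff_one]
      have heq := hsplit.eq_prod_roots
      rw [his, hlead] at heq
      have hev0 := congrArg (eval 0) heq
      have hlhs : eval 0 (Qp y) = -y := by simp [hQp]
      rw [hlhs] at hev0
      simp only [Multiset.insert_eq_cons, Multiset.map_cons, Multiset.map_singleton,
        Multiset.prod_cons, Multiset.prod_singleton, eval_mul, eval_C, eval_sub, eval_X] at hev0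
      have h2 : (-y) * 1 = (-y) * (ρ₁ * ρ₂) := by linear_combination hev0
      exact (mul_left_cancel₀ (neg_ne_zero.mpr hy0) h2).symm
    have hρ1m1 : ρ₁ ≠ -1 := fun hq => hρ1ne (by rw [hq]; ring)
    rw [his]
    rw [Multiset.insert_eq_cons]
    rcases lt_or_gt_of_ne hρ1m1 with hlt | hgt
    · have hρ2in : -1 < ρ₂ := by nlinarith
      rw [Multiset.filter_cons_of_neg _ (by push_neg; intro hc; linarith),
        Multiset.filter_singleton, if_pos ⟨hρ2in, hρ2neg⟩, Multiset.map_singleton, hρ2y]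
    · have hρ2out : ρ₂ < -1 := by nlinarith
      rw [Multiset.filter_cons_of_pos _ ⟨hgt, hρ1neg⟩,
        Multiset.filter_singleton, if_neg (by push_neg; intro hc; linarith)]
      simp [hρ1y]
  
  have hrootsh : h.roots = Multiset.replicate (d - 2*e) (-1) + G.roots := by
    conv_lhs => rw [claim1]
    rw [roots_mul (by rw [← claim1]; exact hne), roots_pow]
    congr 1
    rw [show (1 + X : Polynomial ℝ) = X - C (-1) by rw [map_neg, map_one]; ring, roots_X_sub_C,
      Multiset.nsmul_singleton]
  have hGm1notroot : (-1 : ℝ) ∉ G.roots := fun hmem => hGm1 ((mem_roots hGne).mp hmem)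
  have hGroots : G.roots = g.roots.bind (fun y => (Qp y).roots) := by
    have h0 : (0 : Polynomial ℝ) ∉ g.roots.map Qp := by
      intro h0mem
      obtain ⟨y, hy, hQ0⟩ := Multiset.mem_map.mp h0mem
      have := congrArg (eval 0) hQ0
      simp [hQp] at this
      exact hyne y hy this
    rw [hGfact, roots_mul (by rw [← hGfact]; exact hGne), roots_C, add_zero,
      roots_multiset_prod _ h0, Multiset.bind_map]
  refine ⟨part1, ?_, ?_⟩
  · rw [hrootsh, Multiset.filter_add, Multiset.map_add]
    have hrep : Multiset.filter (fun ρ => -1 < ρ ∧ ρ < 0)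
        (Multiset.replicate (d - 2*e) (-1:ℝ)) = 0 :=
      Multiset.filter_eq_nil.mpr (fun a ha => by
        rw [Multiset.eq_of_mem_replicate ha]; push_neg; intro hc; linarith)
    rw [hrep, Multiset.map_zero, zero_add, hGroots]
    exact (bind_filter_map _ _ _ _ key).symm
  · rw [hrootsh, Multiset.count_add, Multiset.count_replicate, if_pos rfl,
      Multiset.count_eq_zero_of_notMem hGm1notroot, add_zero]

end Statement15Aux

theorem statement15 (h : Polynomial ℝ) (hne : h ≠ 0)
    (hnn : NonnegCoeffs h) (hpal : Palindromic h) (hrr : RealRooted h)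
    (γ : ℕ → ℝ)
    (hexp : h = ∑ i ∈ Finset.range (h.natDegree / 2 + 1),
        Polynomial.C (γ i) * Polynomial.X ^ i * (1 + Polynomial.X) ^ (h.natDegree - 2 * i)) :
    (∀ ρ ∈ h.roots, ρ < 0) ∧
    ((∑ i ∈ Finset.range (h.natDegree / 2 + 1), Polynomial.C (γ i) * Polynomial.X ^ i).roots
        = (h.roots.filter (fun ρ => -1 < ρ ∧ ρ < 0)).map (fun ρ => ρ / (1 + ρ) ^ 2)) ∧
    h.roots.count (-1)
        = h.natDegree
            - 2 * (∑ i ∈ Finset.range (h.natDegree / 2 + 1),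
                Polynomial.C (γ i) * Polynomial.X ^ i).natDegree := by
  exact statement15' h hne hnn hpal hrr γ hexp
end

section
/- Let n ≥ 2, let S ⊆ T ⊆ {1,…,n} with S isolated, and let 0 ≤ k ≤ n. Then the polynomials p_{n,k}^{S⊆T} satisfy the recursion p_{n,k}^{S⊆T}(x) = 1_{{1∈T}} · x · Σ_{j=0}^{k−1} p_{n−1,j}^{(S−1) ⊆ (T−1)∖{1}}(x) + 1_{{1∉S}} · Σ_{j=k}^{n−1} p_{n−1,j}^{(S−1) ⊆ (T−1)}(x), where S−1 = {i−1 : i ∈ S} ∖ {1} and T−1 = {i−1 : i ∈ T} ∖ {1} (shifted sets intersected with {1,…,n−1}), and 1_{A} is 1 if A holds and 0 otherwise. -/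
open Polynomial

namespace S17

def dN (k x : ℕ) : ℕ := if x < k then x else x - 1
def uN (k x : ℕ) : ℕ := if x < k then x else x + 1

lemma uN_dN {k x : ℕ} (h : x ≠ k) : uN k (dN k x) = x := by
  unfold uN dN; split_ifs <;> omega

lemma dN_uN {k x : ℕ} : dN k (uN k x) = x := by
  unfold uN dN; split_ifs <;> omega

lemma uN_ne (k x : ℕ) : uN k x ≠ k := by unfold uN; split_ifs <;> omega

lemma dN_lt_dN {k a b : ℕ} (ha : a ≠ k) (hb : b ≠ k) : dN k a < dN k b ↔ a < b := by
  unfold dN; split_ifs <;> omega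

lemma dN_inj {k a b : ℕ} (ha : a ≠ k) (hb : b ≠ k) (h : dN k a = dN k b) : a = b := by
  unfold dN at h; split_ifs at h <;> omega

lemma dN_lt {m k v : ℕ} (hk : k ≤ m + 2) (hv : v < m + 3) : dN k v < m + 2 := by
  unfold dN; split_ifs <;> omega

lemma uN_lt {m k v : ℕ} (hv : v < m + 2) : uN k v < m + 3 := by
  unfold uN; split_ifs <;> omega

lemma uN_inj {k a b : ℕ} (h : uN k a = uN k b) : a = b := by
  unfold uN at h; split_ifs at h <;> omega

variable {m k : ℕ}

lemma ne_k_of_ne_zero (w : Equiv.Perm (Fin (m + 3))) (h : (w 0 : ℕ) = k)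
    {x : Fin (m + 3)} (hx : x ≠ 0) : (w x : ℕ) ≠ k := by
  intro hc
  exact hx (w.injective (Fin.val_injective (hc.trans h.symm)))

def PhiFun (k : ℕ) (hk : k ≤ m + 2) (w : Equiv.Perm (Fin (m + 3))) (i : Fin (m + 2)) :
    Fin (m + 2) :=
  ⟨dN k (w ⟨i.1 + 1, by have := i.2; omega⟩).1,
    dN_lt hk (w ⟨i.1 + 1, by have := i.2; omega⟩).2⟩

noncomputable def Phi (k : ℕ) (hk : k ≤ m + 2) (w : Equiv.Perm (Fin (m + 3)))
    (h : (w 0 : ℕ) = k) : Equiv.Perm (Fin (m + 2)) :=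
  Equiv.ofBijective (PhiFun k hk w) (by
    rw [← Finite.injective_iff_bijective]
    intro i j hij
    have hij' : dN k (w ⟨i.1 + 1, by have := i.2; omega⟩).1
        = dN k (w ⟨j.1 + 1, by have := j.2; omega⟩).1 := congrArg Fin.val hij
    have h1 : (w ⟨i.1 + 1, by have := i.2; omega⟩ : Fin (m+3)).1 ≠ k :=
      ne_k_of_ne_zero w h (fun hc => absurd (congrArg Fin.val hc) (by simp))
    have h2 : (w ⟨j.1 + 1, by have := j.2; omega⟩ : Fin (m+3)).1 ≠ k :=
      ne_k_of_ne_zero w h (fun hc => absurd (congrArg Fin.val hc) (by simp))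
    have := w.injective (Fin.val_injective (dN_inj h1 h2 hij'))
    simpa [Fin.ext_iff] using this)

lemma Phi_val (hk : k ≤ m + 2) (w : Equiv.Perm (Fin (m + 3)))
    (h : (w 0 : ℕ) = k) (i : Fin (m + 2)) :
    ((Phi k hk w h) i : ℕ) = dN k (w ⟨i.1 + 1, by have := i.2; omega⟩).1 := rfl

lemma Phi_val' (hk : k ≤ m + 2) (w : Equiv.Perm (Fin (m + 3)))
    (h : (w 0 : ℕ) = k) (d : ℕ) (hd : d < m + 2) :
    ((Phi k hk w h) ⟨d, hd⟩ : ℕ) = dN k (w ⟨d + 1, by omega⟩).1 := rfl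

lemma Phi_zero_val (hk : k ≤ m + 2) (w : Equiv.Perm (Fin (m + 3)))
    (h : (w 0 : ℕ) = k) :
    ((Phi k hk w h) 0 : ℕ) = dN k (w 1 : ℕ) := by
  have e0 : (0 : Fin (m + 2)) = ⟨0, by omega⟩ := Fin.val_injective (by simp)
  have e1 : (⟨0 + 1, by omega⟩ : Fin (m + 3)) = 1 := Fin.val_injective (by simp)
  rw [e0, Phi_val' hk w h 0 (by omega), e1]

def PsiFun (k : ℕ) (hk : k ≤ m + 2) (w' : Equiv.Perm (Fin (m + 2))) (x : Fin (m + 3)) :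
    Fin (m + 3) :=
  if x.1 = 0 then ⟨k, by omega⟩
  else ⟨uN k (w' ⟨x.1 - 1, by have := x.2; omega⟩).1,
    uN_lt (w' ⟨x.1 - 1, by have := x.2; omega⟩).2⟩

noncomputable def Psi (k : ℕ) (hk : k ≤ m + 2) (w' : Equiv.Perm (Fin (m + 2))) :
    Equiv.Perm (Fin (m + 3)) :=
  Equiv.ofBijective (PsiFun k hk w') (by
    rw [← Finite.injective_iff_bijective]
    intro x y hxy
    unfold PsiFun at hxy
    split_ifs at hxy with h1 h2 h2
    · exact Fin.val_injective (h1.trans h2.symm)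
    · exact absurd (congrArg Fin.val hxy).symm (uN_ne _ _)
    · exact absurd (congrArg Fin.val hxy) (uN_ne _ _)
    · have := uN_inj (congrArg Fin.val hxy)
      have := w'.injective (Fin.val_injective this)
      have := congrArg Fin.val this
      simp only at this
      exact Fin.val_injective (by omega))

lemma Psi_zero (hk : k ≤ m + 2) (w' : Equiv.Perm (Fin (m + 2))) :
    ((Psi k hk w') 0 : ℕ) = k := rfl

lemma Psi_succ_val (hk : k ≤ m + 2) (w' : Equiv.Perm (Fin (m + 2)))
    (x : Fin (m + 3)) (hx : x.1 ≠ 0) :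
    ((Psi k hk w') x : ℕ) = uN k (w' ⟨x.1 - 1, by have := x.2; omega⟩).1 := by
  show (PsiFun k hk w' x : ℕ) = _
  unfold PsiFun
  rw [if_neg hx]

lemma Psi_one_val (hk : k ≤ m + 2) (w' : Equiv.Perm (Fin (m + 2))) :
    ((Psi k hk w') 1 : ℕ) = uN k (w' 0 : ℕ) := by
  rw [Psi_succ_val hk w' 1 (by simp)]
  congr 2

lemma Psi_Phi (hk : k ≤ m + 2) (w : Equiv.Perm (Fin (m + 3))) (h : (w 0 : ℕ) = k) :
    Psi k hk (Phi k hk w h) = w := by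
  apply Equiv.ext
  intro x
  apply Fin.val_injective
  by_cases hx : x.1 = 0
  · have : x = 0 := Fin.val_injective hx
    rw [this, Psi_zero, h]
  · rw [Psi_succ_val hk _ x hx]
    rw [Phi_val hk w h]
    simp only
    have hxx : (⟨(⟨x.1 - 1, by have := x.2; omega⟩ : Fin (m+2)).1 + 1, by
        have := x.2; simp only; omega⟩ : Fin (m+3)) = x := Fin.val_injective (by simp; omega)
    rw [hxx]
    exact uN_dN (ne_k_of_ne_zero w h (fun hc => hx (congrArg Fin.val hc)))

lemma Phi_Psi (hk : k ≤ m + 2) (w' : Equiv.Perm (Fin (m + 2)))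
    (h : ((Psi k hk w') 0 : ℕ) = k) :
    Phi k hk (Psi k hk w') h = w' := by
  apply Equiv.ext
  intro i
  apply Fin.val_injective
  rw [Phi_val]
  rw [Psi_succ_val hk w' ⟨i.1 + 1, by have := i.2; omega⟩ (by simp)]
  simp only
  have : (⟨(⟨i.1 + 1, by have := i.2; omega⟩ : Fin (m+3)).1 - 1, by
      have := i.2; simp only; omega⟩ : Fin (m+2)) = i := Fin.val_injective (by simp)
  rw [this, dN_uN]

lemma mem_desSet {N : ℕ} (w : Equiv.Perm (Fin (N + 1))) (d : ℕ) :
    d ∈ desSet w ↔ ∃ (_ : 1 ≤ d) (h2 : d ≤ N),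
      (w ⟨d, Nat.lt_succ_of_le h2⟩ : ℕ) <
        (w ⟨d - 1, lt_of_le_of_lt (Nat.sub_le d 1) (Nat.lt_succ_of_le h2)⟩ : ℕ) := by
  simp only [desSet, Finset.mem_image, Finset.mem_filter, Finset.mem_univ, true_and]
  constructor
  · rintro ⟨i, hlt, rfl⟩
    refine ⟨by omega, by have := i.2; omega, ?_⟩
    have h1 : (⟨i.1 + 1, by have := i.2; omega⟩ : Fin (N+1)) = i.succ := rfl
    have h2 : (⟨i.1 + 1 - 1, by have := i.2; omega⟩ : Fin (N+1)) = i.castSucc :=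
      Fin.val_injective (by simp)
    rw [h1, h2]
    exact hlt
  · rintro ⟨h1, h2, hlt⟩
    refine ⟨⟨d - 1, by omega⟩, ?_, by show d - 1 + 1 = d; omega⟩
    have ha : (⟨d - 1, by omega⟩ : Fin N).succ = (⟨d, by omega⟩ : Fin (N+1)) :=
      Fin.val_injective (by show d - 1 + 1 = d; omega)
    have hb : (⟨d - 1, by omega⟩ : Fin N).castSucc = (⟨d - 1, by omega⟩ : Fin (N+1)) :=
      Fin.val_injective (by simp)
    rw [ha, hb]
    exact hlt

lemma desSet_subset_Icc {N : ℕ} (w : Equiv.Perm (Fin (N + 1))) :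
    desSet w ⊆ Finset.Icc 1 N := by
  intro d hd
  rw [mem_desSet] at hd
  obtain ⟨h1, h2, -⟩ := hd
  exact Finset.mem_Icc.2 ⟨h1, h2⟩

lemma shift_mem {D : Finset ℕ} (hD : D ⊆ Finset.Icc 1 (m + 2)) (d : ℕ) :
    d ∈ shiftDown (m + 2) D ↔ 1 ≤ d ∧ d + 1 ∈ D := by
  simp only [shiftDown, Finset.mem_inter, Finset.mem_image, Finset.mem_Icc]
  constructor
  · rintro ⟨⟨e, he, rfl⟩, h1, h2⟩
    have := Finset.mem_Icc.1 (hD he)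
    refine ⟨h1, ?_⟩
    have : e = e - 1 + 1 := by omega
    rwa [← this]
  · rintro ⟨h1, h2⟩
    have := Finset.mem_Icc.1 (hD h2)
    exact ⟨⟨d + 1, h2, by omega⟩, h1, by omega⟩

lemma card_shift {D : Finset ℕ} (hD : D ⊆ Finset.Icc 1 (m + 2)) :
    D.card = (shiftDown (m + 2) D).card + (if 1 ∈ D then 1 else 0) := by
  have himg : shiftDown (m + 2) D = (D.erase 1).image (fun x => x - 1) := by
    ext d
    rw [shift_mem hD]
    simp only [Finset.mem_image, Finset.mem_erase]
    constructor
    · rintro ⟨h1, h2⟩; exact ⟨d + 1, ⟨by omega, h2⟩, by omega⟩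
    · rintro ⟨e, ⟨he1, he2⟩, rfl⟩
      have := Finset.mem_Icc.1 (hD he2)
      constructor
      · omega
      · have : e = e - 1 + 1 := by omega
        rwa [← this]
  rw [himg, Finset.card_image_of_injOn]
  · split_ifs with h1
    · rw [Finset.card_erase_of_mem h1]
      have : 1 ≤ D.card := Finset.card_pos.2 ⟨1, h1⟩
      omega
    · rw [Finset.erase_eq_of_notMem h1]; omega
  · intro x hx y hy hxy
    simp only at hxy
    have hx2 := Finset.mem_Icc.1 (hD (Finset.mem_of_mem_erase hx))
    have hy2 := Finset.mem_Icc.1 (hD (Finset.mem_of_mem_erase hy))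
    have hx1 := Finset.ne_of_mem_erase hx
    have hy1 := Finset.ne_of_mem_erase hy
    omega

lemma subset_shift_iff {A B : Finset ℕ} (hA : A ⊆ Finset.Icc 1 (m + 2))
    (hB : B ⊆ Finset.Icc 1 (m + 2)) :
    A ⊆ B ↔ (1 ∈ A → 1 ∈ B) ∧ shiftDown (m + 2) A ⊆ shiftDown (m + 2) B := by
  constructor
  · intro hAB
    refine ⟨fun h => hAB h, fun d hd => ?_⟩
    rw [shift_mem hA] at hd
    rw [shift_mem hB]
    exact ⟨hd.1, hAB hd.2⟩
  · rintro ⟨h1, hsh⟩ a ha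
    have ha2 := Finset.mem_Icc.1 (hA ha)
    rcases Nat.eq_or_lt_of_le ha2.1 with h | h
    · exact h ▸ h1 (h ▸ ha)
    · have hmem : a - 1 ∈ shiftDown (m + 2) A := by
        rw [shift_mem hA]
        refine ⟨by omega, ?_⟩
        have he : a - 1 + 1 = a := by omega
        rwa [he]
      have := hsh hmem
      rw [shift_mem hB] at this
      have he : a - 1 + 1 = a := by omega
      rw [he] at this
      exact this.2

lemma iso_shift_iff {D : Finset ℕ} (hD : D ⊆ Finset.Icc 1 (m + 2)) :
    IsolatedSet D ↔ IsolatedSet (shiftDown (m + 2) D) ∧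
      (1 ∈ D → 1 ∉ shiftDown (m + 2) D) := by
  constructor
  · intro hiso
    constructor
    · intro e he
      rw [shift_mem hD] at he
      rw [shift_mem hD]
      rintro ⟨-, h2⟩
      exact hiso (e + 1) he.2 h2
    · intro h1 hc
      rw [shift_mem hD] at hc
      exact hiso 1 h1 hc.2
  · rintro ⟨hiso', h1'⟩ d hd hc
    have hd2 := Finset.mem_Icc.1 (hD hd)
    rcases Nat.eq_or_lt_of_le hd2.1 with h | h
    · subst h
      exact h1' hd (by rw [shift_mem hD]; exact ⟨le_refl 1, hc⟩)
    · have hmem : d - 1 ∈ shiftDown (m + 2) D := by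
        rw [shift_mem hD]
        have he : d - 1 + 1 = d := by omega
        rw [he]
        exact ⟨by omega, hd⟩
      have := hiso' _ hmem
      rw [shift_mem hD] at this
      have he : d - 1 + 1 = d := by omega
      rw [he] at this
      exact this ⟨by omega, hc⟩

set_option maxHeartbeats 2000000 in
lemma desSet_Phi (hk : k ≤ m + 2) (w : Equiv.Perm (Fin (m + 3))) (h : (w 0 : ℕ) = k) :
    desSet (Phi k hk w h) = shiftDown (m + 2) (desSet w) := by
  ext d
  rw [shift_mem (desSet_subset_Icc w), mem_desSet, mem_desSet]
  constructor
  · rintro ⟨h1, h2, hlt⟩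
    rw [Phi_val' hk w h d (by omega), Phi_val' hk w h (d - 1) (by omega)] at hlt
    have e1 : (⟨d - 1 + 1, by omega⟩ : Fin (m+3)) = ⟨d, by omega⟩ :=
      Fin.val_injective (by simp; omega)
    rw [e1] at hlt
    have n1 : ((w ⟨d + 1, by omega⟩ : Fin (m+3)) : ℕ) ≠ k :=
      ne_k_of_ne_zero w h (by simp [Fin.ext_iff])
    have n2 : ((w ⟨d, by omega⟩ : Fin (m+3)) : ℕ) ≠ k :=
      ne_k_of_ne_zero w h (by simp [Fin.ext_iff]; omega)
    rw [dN_lt_dN n1 n2] at hlt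
    exact ⟨h1, Nat.le_add_left 1 d, Nat.succ_le_succ h2, hlt⟩
  · rintro ⟨h1, h2, h3, hlt⟩
    have h2' : d ≤ m + 1 := by omega
    refine ⟨h1, h2', ?_⟩
    rw [Phi_val' hk w h d (Nat.lt_succ_of_le h2'),
      Phi_val' hk w h (d - 1) (lt_of_le_of_lt (Nat.sub_le d 1) (Nat.lt_succ_of_le h2'))]
    have e1 : (⟨d - 1 + 1, by omega⟩ : Fin (m+3)) = ⟨d, by omega⟩ :=
      Fin.val_injective (by simp; omega)
    rw [e1]
    have n1 : ((w ⟨d + 1, by omega⟩ : Fin (m+3)) : ℕ) ≠ k :=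
      ne_k_of_ne_zero w h (by simp [Fin.ext_iff])
    have n2 : ((w ⟨d, by omega⟩ : Fin (m+3)) : ℕ) ≠ k :=
      ne_k_of_ne_zero w h (by simp [Fin.ext_iff]; omega)
    rw [dN_lt_dN n1 n2]
    exact hlt

lemma one_mem_desSet (w : Equiv.Perm (Fin (m + 3))) (h : (w 0 : ℕ) = k) :
    1 ∈ desSet (n := m + 2) w ↔ (w 1 : ℕ) < k := by
  rw [mem_desSet]
  have e1 : (⟨1, by omega⟩ : Fin (m+3)) = 1 := Fin.val_injective (by simp)
  have e0 : (⟨1 - 1, by omega⟩ : Fin (m+3)) = 0 := Fin.val_injective (by simp)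
  constructor
  · rintro ⟨-, h2x, hlt⟩
    rw [e1, e0, h] at hlt
    exact hlt
  · intro hlt
    refine ⟨le_refl 1, Nat.le_add_left 1 (m + 1), ?_⟩
    rw [e1, e0, h]
    exact hlt

noncomputable def PhiT (m k : ℕ) (hk : k ≤ m + 2) (w : Equiv.Perm (Fin (m + 3))) :
    Equiv.Perm (Fin (m + 2)) :=
  if h : (w 0 : ℕ) = k then Phi k hk w h else 1

lemma PhiT_eq (hk : k ≤ m + 2) (w : Equiv.Perm (Fin (m + 3))) (h : (w 0 : ℕ) = k) :
    PhiT m k hk w = Phi k hk w h := dif_pos h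

end S17

theorem statement17 (n : ℕ) (hn : 2 ≤ n) (S T : Finset ℕ)
    (hST : S ⊆ T) (hT : T ⊆ Finset.Icc 1 n) (hiso : IsolatedSet S)
    (k : ℕ) (hk : k ≤ n) :
    pPoly n k S T =
      (if 1 ∈ T then
          Polynomial.X *
            ∑ j ∈ Finset.range k, pPoly (n - 1) j (shiftDown n S) ((shiftDown n T).erase 1)
        else 0)
      + (if 1 ∈ S then 0
        else ∑ j ∈ Finset.Icc k (n - 1), pPoly (n - 1) j (shiftDown n S) (shiftDown n T)) := by
  obtain ⟨m, rfl⟩ : ∃ m, n = m + 2 := ⟨n - 2, by omega⟩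
  have hk2 : k ≤ m + 2 := hk
  have hTIcc : T ⊆ Finset.Icc 1 (m + 2) := hT
  have hSIcc : S ⊆ Finset.Icc 1 (m + 2) := hST.trans hT
  have hm1 : m + 2 - 1 = m + 1 := rfl
  rw [hm1]
  rw [pPoly, ← Finset.sum_filter_add_sum_filter_not _
    (fun w : Equiv.Perm (Fin (m + 3)) => (w 1 : ℕ) < k) _]
  congr 1
  · -- first summand
    by_cases h1T : 1 ∈ T
    · rw [if_pos h1T]
      simp only [pPoly, Finset.mul_sum]
      simp only [← pow_succ']
      rw [Finset.sum_sigma']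
      refine Finset.sum_nbij'
        (fun w => ⟨((S17.PhiT m k hk2 w) 0 : ℕ), S17.PhiT m k hk2 w⟩)
        (fun p => S17.Psi k hk2 p.2) ?_ ?_ ?_ ?_ ?_
      · -- hi
        intro w hw
        simp only [Finset.mem_filter, Finset.mem_univ, true_and] at hw
        obtain ⟨⟨h0, hIso, hSsub, hTsub⟩, h1lt⟩ := hw
        have hDIcc := S17.desSet_subset_Icc (N := m + 2) w
        have h1D : 1 ∈ desSet w := (S17.one_mem_desSet w h0).2 h1lt
        rw [S17.PhiT_eq hk2 w h0]
        rw [Finset.mem_sigma]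
        constructor
        · rw [Finset.mem_range, S17.Phi_zero_val hk2 w h0]
          simp only [S17.dN]
          rw [if_pos h1lt]
          exact h1lt
        · simp only [Finset.mem_filter, Finset.mem_univ, true_and]
          refine ⟨?_, ?_, ?_⟩
          · rw [S17.desSet_Phi hk2 w h0]
            exact ((S17.iso_shift_iff hDIcc).1 hIso).1
          · rw [S17.desSet_Phi hk2 w h0]
            exact ((S17.subset_shift_iff hSIcc hDIcc).1 hSsub).2
          · rw [S17.desSet_Phi hk2 w h0, Finset.subset_erase]
            exact ⟨((S17.subset_shift_iff hDIcc hTIcc).1 hTsub).2,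
              ((S17.iso_shift_iff hDIcc).1 hIso).2 h1D⟩
      · -- hj
        rintro ⟨j, w'⟩ hp
        dsimp only
        rw [Finset.mem_sigma] at hp
        obtain ⟨hj1, hj2⟩ := hp
        rw [Finset.mem_range] at hj1
        have hj1' : j < k := hj1
        simp only [Finset.mem_filter, Finset.mem_univ, true_and] at hj2
        obtain ⟨hp0, hIso', hS', hT'⟩ := hj2
        have h0 : ((S17.Psi k hk2 w') 0 : ℕ) = k := S17.Psi_zero hk2 w'
        have hPP : S17.Phi k hk2 (S17.Psi k hk2 w') h0 = w' := S17.Phi_Psi hk2 w' h0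
        have hsh : shiftDown (m + 2) (desSet (S17.Psi k hk2 w')) = desSet w' :=
          (S17.desSet_Phi hk2 (S17.Psi k hk2 w') h0).symm.trans (congrArg desSet hPP)
        have hDIcc := S17.desSet_subset_Icc (N := m + 2) (S17.Psi k hk2 w')
        have h1lt : ((S17.Psi k hk2 w') 1 : ℕ) < k := by
          rw [S17.Psi_one_val hk2 w', hp0]
          simp only [S17.uN]
          rw [if_pos hj1']
          exact hj1'
        have h1D : 1 ∈ desSet (S17.Psi k hk2 w') :=
          (S17.one_mem_desSet (S17.Psi k hk2 w') h0).2 h1lt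
        have h1nD' : 1 ∉ desSet w' := (Finset.subset_erase.1 hT').2
        simp only [Finset.mem_filter, Finset.mem_univ, true_and]
        refine ⟨⟨h0, ?_, ?_, ?_⟩, h1lt⟩
        · exact (S17.iso_shift_iff hDIcc).2
            ⟨by rw [hsh]; exact hIso', fun _ => by rw [hsh]; exact h1nD'⟩
        · exact (S17.subset_shift_iff hSIcc hDIcc).2
            ⟨fun _ => h1D, by rw [hsh]; exact hS'⟩
        · exact (S17.subset_shift_iff hDIcc hTIcc).2
            ⟨fun _ => h1T, by rw [hsh]; exact (Finset.subset_erase.1 hT').1⟩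
      · -- left inverse
        intro w hw
        dsimp only
        simp only [Finset.mem_filter, Finset.mem_univ, true_and] at hw
        obtain ⟨⟨h0, -, -, -⟩, -⟩ := hw
        rw [S17.PhiT_eq hk2 w h0]
        exact S17.Psi_Phi hk2 w h0
      · -- right inverse
        rintro ⟨j, w'⟩ hp
        dsimp only
        rw [Finset.mem_sigma] at hp
        obtain ⟨-, hj2⟩ := hp
        simp only [Finset.mem_filter, Finset.mem_univ, true_and] at hj2
        have hp0 : (w' 0 : ℕ) = j := hj2.1
        have h0 : ((S17.Psi k hk2 w') 0 : ℕ) = k := S17.Psi_zero hk2 w'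
        have hPP : S17.PhiT m k hk2 (S17.Psi k hk2 w') = w' :=
          (S17.PhiT_eq hk2 _ h0).trans (S17.Phi_Psi hk2 w' h0)
        rw [hPP, hp0]
      · -- values
        intro w hw
        dsimp only
        simp only [Finset.mem_filter, Finset.mem_univ, true_and] at hw
        obtain ⟨⟨h0, -, -, -⟩, h1lt⟩ := hw
        have hDIcc := S17.desSet_subset_Icc (N := m + 2) w
        have h1D : 1 ∈ desSet w := (S17.one_mem_desSet w h0).2 h1lt
        rw [S17.PhiT_eq hk2 w h0, S17.desSet_Phi hk2 w h0]
        have hc := S17.card_shift hDIcc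
        rw [if_pos h1D] at hc
        rw [hc]
    · rw [if_neg h1T]
      rw [Finset.filter_eq_empty_iff.mpr ?_, Finset.sum_empty]
      intro w hw
      have hP := (Finset.mem_filter.1 hw).2
      intro hlt
      exact h1T (hP.2.2.2 ((S17.one_mem_desSet w hP.1).2 hlt))
  · -- second summand
    by_cases h1S : 1 ∈ S
    · rw [if_pos h1S]
      rw [Finset.filter_eq_empty_iff.mpr ?_, Finset.sum_empty]
      intro w hw
      have hP := (Finset.mem_filter.1 hw).2
      exact not_not_intro ((S17.one_mem_desSet w hP.1).1 (hP.2.2.1 h1S))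
    · rw [if_neg h1S]
      simp only [pPoly]
      rw [Finset.sum_sigma']
      refine Finset.sum_nbij'
        (fun w => ⟨((S17.PhiT m k hk2 w) 0 : ℕ), S17.PhiT m k hk2 w⟩)
        (fun p => S17.Psi k hk2 p.2) ?_ ?_ ?_ ?_ ?_
      · -- hi
        intro w hw
        simp only [Finset.mem_filter, Finset.mem_univ, true_and] at hw
        obtain ⟨⟨h0, hIso, hSsub, hTsub⟩, h1nlt⟩ := hw
        have hDIcc := S17.desSet_subset_Icc (N := m + 2) w
        have hne : (w 1 : ℕ) ≠ k :=
          S17.ne_k_of_ne_zero w h0 (by simp [Fin.ext_iff])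
        have hlt3 : (w 1 : ℕ) < m + 3 := (w 1).2
        rw [S17.PhiT_eq hk2 w h0]
        rw [Finset.mem_sigma]
        constructor
        · rw [Finset.mem_Icc, S17.Phi_zero_val hk2 w h0]
          simp only [S17.dN]
          rw [if_neg h1nlt]
          omega
        · simp only [Finset.mem_filter, Finset.mem_univ, true_and]
          refine ⟨?_, ?_, ?_⟩
          · rw [S17.desSet_Phi hk2 w h0]
            exact ((S17.iso_shift_iff hDIcc).1 hIso).1
          · rw [S17.desSet_Phi hk2 w h0]
            exact ((S17.subset_shift_iff hSIcc hDIcc).1 hSsub).2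
          · rw [S17.desSet_Phi hk2 w h0]
            exact ((S17.subset_shift_iff hDIcc hTIcc).1 hTsub).2
      · -- hj
        rintro ⟨j, w'⟩ hp
        dsimp only
        rw [Finset.mem_sigma] at hp
        obtain ⟨hj1, hj2⟩ := hp
        rw [Finset.mem_Icc] at hj1
        have hj1' : k ≤ j ∧ j ≤ m + 1 := hj1
        simp only [Finset.mem_filter, Finset.mem_univ, true_and] at hj2
        obtain ⟨hp0, hIso', hS', hT'⟩ := hj2
        have h0 : ((S17.Psi k hk2 w') 0 : ℕ) = k := S17.Psi_zero hk2 w'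
        have hPP : S17.Phi k hk2 (S17.Psi k hk2 w') h0 = w' := S17.Phi_Psi hk2 w' h0
        have hsh : shiftDown (m + 2) (desSet (S17.Psi k hk2 w')) = desSet w' :=
          (S17.desSet_Phi hk2 (S17.Psi k hk2 w') h0).symm.trans (congrArg desSet hPP)
        have hDIcc := S17.desSet_subset_Icc (N := m + 2) (S17.Psi k hk2 w')
        have h1nlt : ¬ ((S17.Psi k hk2 w') 1 : ℕ) < k := by
          rw [S17.Psi_one_val hk2 w', hp0]
          simp only [S17.uN]
          rw [if_neg (by omega)]
          omega
        have h1nD : 1 ∉ desSet (S17.Psi k hk2 w') :=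
          fun hc => h1nlt ((S17.one_mem_desSet (S17.Psi k hk2 w') h0).1 hc)
        simp only [Finset.mem_filter, Finset.mem_univ, true_and]
        refine ⟨⟨h0, ?_, ?_, ?_⟩, h1nlt⟩
        · exact (S17.iso_shift_iff hDIcc).2
            ⟨by rw [hsh]; exact hIso', fun h1D => absurd h1D h1nD⟩
        · exact (S17.subset_shift_iff hSIcc hDIcc).2
            ⟨fun hc => absurd hc h1S, by rw [hsh]; exact hS'⟩
        · exact (S17.subset_shift_iff hDIcc hTIcc).2
            ⟨fun h1D => absurd h1D h1nD, by rw [hsh]; exact hT'⟩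
      · -- left inverse
        intro w hw
        dsimp only
        simp only [Finset.mem_filter, Finset.mem_univ, true_and] at hw
        obtain ⟨⟨h0, -, -, -⟩, -⟩ := hw
        rw [S17.PhiT_eq hk2 w h0]
        exact S17.Psi_Phi hk2 w h0
      · -- right inverse
        rintro ⟨j, w'⟩ hp
        dsimp only
        rw [Finset.mem_sigma] at hp
        obtain ⟨-, hj2⟩ := hp
        simp only [Finset.mem_filter, Finset.mem_univ, true_and] at hj2
        have hp0 : (w' 0 : ℕ) = j := hj2.1
        have h0 : ((S17.Psi k hk2 w') 0 : ℕ) = k := S17.Psi_zero hk2 w'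
        have hPP : S17.PhiT m k hk2 (S17.Psi k hk2 w') = w' :=
          (S17.PhiT_eq hk2 _ h0).trans (S17.Phi_Psi hk2 w' h0)
        rw [hPP, hp0]
      · -- values
        intro w hw
        dsimp only
        simp only [Finset.mem_filter, Finset.mem_univ, true_and] at hw
        obtain ⟨⟨h0, -, -, -⟩, h1nlt⟩ := hw
        have hDIcc := S17.desSet_subset_Icc (N := m + 2) w
        have h1nD : 1 ∉ desSet w :=
          fun hc => h1nlt ((S17.one_mem_desSet w h0).1 hc)
        rw [S17.PhiT_eq hk2 w h0, S17.desSet_Phi hk2 w h0]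
        have hc := S17.card_shift hDIcc
        rw [if_neg h1nD] at hc
        rw [hc, Nat.add_zero]
end
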